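/- arXiv:2310.13225 — 3 statements merged into one kernel-verified Lean document; each statement's English description precedes it below -/
import Mathlib

section
/- Let d ≥ 1 be an integer and let A ≤ 0 be a real number. For g, z ∈ ℝ^d define Λ_g(z) = (1−4A)^{d/4} · exp(A‖g‖₂² + √(1−4A)·⟨g,z⟩ − ‖z‖₂²/2). Then for all x, y ∈ ℝ^d, the integral of Λ_g(x)·Λ_g(y) with respect to the standard Gaussian measure N(0, I_d) on g equals exp(⟨x,y⟩), i.e. 𝔼_{g∼N(0,I_d)}[Λ_g(x)Λ_g(y)] = exp(⟨x,y⟩). -/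
/-!
The feature `Λ_g(z)` factorises over the coordinates of `g` and `z`, so by Fubini the expectation
is a product of one-dimensional Gaussian integrals of `exp (2A t² + s (u + v) t)`, `s = √(1 - 4A)`.
Completing the square, each equals `(1 - 4A)^(-1/2) exp (s² (u + v)² / (2 (1 - 4A)))`; the prefactor
cancels the normalisation `(1 - 4A)^(1/2)` and the exponent becomes `(u + v)² / 2`, which together
with the `-(u² + v²)/2` of the features leaves `exp (u v)`.
-/

open MeasureTheory ProbabilityTheory Real RealInnerProductSpace

noncomputable def stdGaussian (d : ℕ) : Measure (EuclideanSpace ℝ (Fin d)) :=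
  (Measure.pi fun _ => gaussianReal 0 1).map (MeasurableEquiv.toLp 2 (Fin d → ℝ))

noncomputable def lambdaRF (d : ℕ) (A : ℝ) (g z : EuclideanSpace ℝ (Fin d)) : ℝ :=
  (1 - 4 * A) ^ ((d : ℝ) / 4) *
    Real.exp (A * ‖g‖ ^ 2 + Real.sqrt (1 - 4 * A) * ⟪g, z⟫ - ‖z‖ ^ 2 / 2)

theorem integral_exp_neg_mul_sq_add_mul {p : ℝ} (hp : 0 < p) (b : ℝ) :
    ∫ t : ℝ, exp (-p * t ^ 2 + b * t) = √(π / p) * exp (b ^ 2 / (4 * p)) := by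
  have complete_square : ∀ t : ℝ,
      -p * t ^ 2 + b * t = -p * (t - b / (2 * p)) ^ 2 + b ^ 2 / (4 * p) := by
    intro t; field_simp; ring
  simp_rw [complete_square, exp_add, integral_mul_const]
  rw [integral_sub_right_eq_self (fun t => exp (-p * t ^ 2)) (b / (2 * p)), integral_gaussian]

theorem integral_exp_quadratic_gaussianReal {a : ℝ} (ha : a < 1 / 2) (b : ℝ) :
    ∫ t, exp (a * t ^ 2 + b * t) ∂(gaussianReal 0 1) =
      (√(1 - 2 * a))⁻¹ * exp (b ^ 2 / (2 * (1 - 2 * a))) := by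
  have hq : 0 < 1 - 2 * a := by linarith
  have density_mul : ∀ t : ℝ, gaussianPDFReal 0 1 t • exp (a * t ^ 2 + b * t) =
      (√(2 * π))⁻¹ * exp (-((1 - 2 * a) / 2) * t ^ 2 + b * t) := by
    intro t
    rw [gaussianPDFReal, smul_eq_mul, mul_assoc, ← exp_add, NNReal.coe_one, mul_one]
    congr 2
    ring
  simp_rw [integral_gaussianReal_eq_integral_smul one_ne_zero, density_mul, integral_const_mul,
    integral_exp_neg_mul_sq_add_mul (half_pos hq)]
  rw [show π / ((1 - 2 * a) / 2) = 2 * π / (1 - 2 * a) by field_simp,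
    sqrt_div (by positivity)]
  have : √(1 - 2 * a) ≠ 0 := by positivity
  field_simp
  congr 1
  field_simp
  ring

noncomputable def lambdaRF₁ (A t u : ℝ) : ℝ :=
  (1 - 4 * A) ^ ((1 : ℝ) / 4) * exp (A * t ^ 2 + √(1 - 4 * A) * t * u - u ^ 2 / 2)

theorem integral_lambdaRF₁_mul {A : ℝ} (hA : A < 1 / 4) (u v : ℝ) :
    ∫ t, lambdaRF₁ A t u * lambdaRF₁ A t v ∂(gaussianReal 0 1) = exp (u * v) := by
  have h4A : 0 < 1 - 4 * A := by linarith
  have hs : √(1 - 4 * A) ^ 2 = 1 - 4 * A := sq_sqrt h4A.le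
  have hconst : (1 - 4 * A) ^ ((1 : ℝ) / 4) * (1 - 4 * A) ^ ((1 : ℝ) / 4) = √(1 - 4 * A) := by
    rw [← rpow_add h4A, sqrt_eq_rpow]; norm_num
  have integrand : ∀ t, lambdaRF₁ A t u * lambdaRF₁ A t v =
      √(1 - 4 * A) * exp (-(u ^ 2 + v ^ 2) / 2) *
        exp ((2 * A) * t ^ 2 + √(1 - 4 * A) * (u + v) * t) := by
    intro t
    rw [lambdaRF₁, lambdaRF₁, mul_mul_mul_comm, hconst, ← exp_add, mul_assoc _ (exp _), ← exp_add]
    congr 2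
    ring
  simp_rw [integrand, integral_const_mul,
    integral_exp_quadratic_gaussianReal (show 2 * A < 1 / 2 by linarith)]
  rw [show 1 - 2 * (2 * A) = 1 - 4 * A by ring, mul_pow, hs]
  have : √(1 - 4 * A) ≠ 0 := by positivity
  field_simp
  rw [← exp_add]
  ring_nf

theorem lambdaRF_eq_prod {d : ℕ} {A : ℝ} (hA : A ≤ 1 / 4) (g z : EuclideanSpace ℝ (Fin d)) :
    lambdaRF d A g z = ∏ i, lambdaRF₁ A (g i) (z i) := by
  have h4A : 0 ≤ 1 - 4 * A := by linarith
  simp only [lambdaRF, lambdaRF₁, Finset.prod_mul_distrib, Finset.prod_const, Finset.card_univ,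
    Fintype.card_fin, ← exp_sum, EuclideanSpace.real_norm_sq_eq, PiLp.inner_apply,
    RCLike.inner_apply, conj_trivial, Finset.mul_sum, Finset.sum_div, ← Finset.sum_add_distrib,
    ← Finset.sum_sub_distrib, ← rpow_mul_natCast h4A]
  congr 2
  · ring
  · exact Finset.sum_congr rfl fun i _ => by ring

theorem integral_stdGaussian_prod {d : ℕ} (f : Fin d → ℝ → ℝ) :
    ∫ g, ∏ i, f i (g i) ∂(stdGaussian d) = ∏ i, ∫ t, f i t ∂(gaussianReal 0 1) := by
  rw [_root_.stdGaussian, integral_map_equiv]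
  exact integral_fintype_prod_eq_prod f

theorem stmt_0_general (d : ℕ) (A : ℝ) (hA : A ≤ 0)
    (x y : EuclideanSpace ℝ (Fin d)) :
    ∫ g, lambdaRF d A g x * lambdaRF d A g y ∂(stdGaussian d) =
      Real.exp ⟪x, y⟫ := by
  simp_rw [lambdaRF_eq_prod (by linarith : A ≤ 1 / 4), ← Finset.prod_mul_distrib]
  rw [integral_stdGaussian_prod fun i t => lambdaRF₁ A t (x i) * lambdaRF₁ A t (y i)]
  simp_rw [integral_lambdaRF₁_mul (by linarith : A < 1 / 4)]
  simp only [← exp_sum, PiLp.inner_apply, RCLike.inner_apply, conj_trivial, mul_comm]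

theorem stmt_0 (d : ℕ) (hd : 1 ≤ d) (A : ℝ) (hA : A ≤ 0)
    (x y : EuclideanSpace ℝ (Fin d)) :
    ∫ g, lambdaRF d A g x * lambdaRF d A g y ∂(stdGaussian d) =
      Real.exp ⟪x, y⟫ :=
  stmt_0_general d A hA x y
end

section
/- Let f : ℝ → ℂ and let F₀, F₁, F₂, F₃ : ℝ → ℝ≥0 be nonnegative integrable functions with I_j := ∫_ℝ F_j(τ) dτ > 0 for each j, such that for all z ∈ ℝ, f(z) = ∫_ℝ (F₀(ξ) − F₁(ξ) + i·F₂(ξ) − i·F₃(ξ)) · exp(2πiξz) dξ. For each j let p_j(ξ) = F_j(ξ)/I_j (a probability density), and let P̄_j be a probability measure on ℝ with a density p̄_j that is strictly positive wherever p_j is positive. Set c₀ = I₀, c₁ = −I₁, c₂ = i·I₂, c₃ = −i·I₃. Then for all z ∈ ℝ, f(z) = Σ_{j=0}^{3} c_j · 𝔼_{ξ∼P̄_j}[(p_j(ξ)/p̄_j(ξ)) · exp(2πiξz)], and each integrand is P̄_j-integrable. -/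
/-! Importance sampling: wherever `p̄ⱼ` vanishes so does `pⱼ = Fⱼ / Iⱼ`, hence
`p̄ⱼ · (pⱼ / p̄ⱼ) = pⱼ` pointwise, and the `P̄ⱼ`-integral of `(pⱼ / p̄ⱼ) · e` is the Lebesgue
integral of `pⱼ · e`, where `e ξ = exp (2πiξz)`. Since `cⱼ pⱼ` is `F₀, -F₁, i F₂, -i F₃`, summing
over `j` and using linearity of the integral recovers the Fourier inversion formula. -/

open MeasureTheory Real

section ImportanceSampling

variable {α E : Type*} [NormedAddCommGroup E] [NormedSpace ℝ E] {p q : α → ℝ}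

lemma toNNReal_smul_div_smul_eq (hq : ∀ x, p x ≤ 0 → q x = 0) (g : α → E) :
    (fun x => (p x).toNNReal • ((q x / p x) • g x)) = fun x => q x • g x := by
  funext x
  rcases le_or_gt (p x) 0 with hpx | hpx
  · simp [Real.toNNReal_of_nonpos hpx, hq x hpx]
  · rw [NNReal.smul_def, Real.coe_toNNReal _ hpx.le, smul_smul, mul_div_cancel₀ _ hpx.ne']

variable [MeasurableSpace α] {μ : Measure α}

lemma integrable_withDensity_ofReal_div_smul_iff (hp : Measurable p)
    (hq : ∀ x, p x ≤ 0 → q x = 0) (g : α → E) :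
    Integrable (fun x => (q x / p x) • g x) (μ.withDensity fun x => ENNReal.ofReal (p x)) ↔
      Integrable (fun x => q x • g x) μ := by
  rw [← toNNReal_smul_div_smul_eq hq g]
  exact integrable_withDensity_iff_integrable_smul hp.real_toNNReal

lemma integral_withDensity_ofReal_div_smul (hp : Measurable p)
    (hq : ∀ x, p x ≤ 0 → q x = 0) (g : α → E) :
    ∫ x, (q x / p x) • g x ∂(μ.withDensity fun x => ENNReal.ofReal (p x)) =
      ∫ x, q x • g x ∂μ := by
  rw [← toNNReal_smul_div_smul_eq hq g]
  exact integral_withDensity_eq_integral_smul hp.real_toNNReal _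

end ImportanceSampling

lemma norm_exp_two_pi_I_mul_mul (ξ z : ℝ) :
    ‖Complex.exp (2 * π * Complex.I * ξ * z)‖ = 1 := by
  have : 2 * π * Complex.I * ξ * z = ((2 * π * ξ * z : ℝ) : ℂ) * Complex.I := by
    push_cast; ring
  rw [this, Complex.norm_exp_ofReal_mul_I]

lemma integrable_ofReal_mul_exp_two_pi_I_mul {g : ℝ → ℝ} (hg : Integrable g) (z : ℝ) :
    Integrable fun ξ : ℝ => (g ξ : ℂ) * Complex.exp (2 * π * Complex.I * ξ * z) := by
  have hcont : Continuous fun ξ : ℝ => Complex.exp (2 * π * Complex.I * ξ * z) := by fun_prop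
  exact hg.ofReal.mul_bdd hcont.aestronglyMeasurable
    (.of_forall fun ξ => (norm_exp_two_pi_I_mul_mul ξ z).le)

theorem stmt_11_general (f : ℝ → ℂ) (F : Fin 4 → ℝ → ℝ)
    (hFnn : ∀ j ξ, 0 ≤ F j ξ) (hFint : ∀ j, Integrable (F j))
    (I : Fin 4 → ℝ) (hIpos : ∀ j, 0 < I j)
    -- Fourier inversion representation of `f`
    (hinv : ∀ z : ℝ,
      f z = ∫ ξ : ℝ,
        (((F 0 ξ - F 1 ξ : ℝ) : ℂ) + Complex.I * ((F 2 ξ : ℝ) : ℂ)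
            - Complex.I * ((F 3 ξ : ℝ) : ℂ)) *
          Complex.exp (2 * π * Complex.I * ξ * z))
    -- proposal densities
    (pbar : Fin 4 → ℝ → ℝ)
    (hpbar_meas : ∀ j, Measurable (pbar j))
    (hpos : ∀ j ξ, 0 < F j ξ / I j → 0 < pbar j ξ)
    (c : Fin 4 → ℂ)
    (hc0 : c 0 = ((I 0 : ℝ) : ℂ)) (hc1 : c 1 = -((I 1 : ℝ) : ℂ))
    (hc2 : c 2 = Complex.I * ((I 2 : ℝ) : ℂ))
    (hc3 : c 3 = -(Complex.I * ((I 3 : ℝ) : ℂ))) :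
    ∀ z : ℝ,
      (f z = ∑ j, c j *
          ∫ ξ, (((F j ξ / I j) / pbar j ξ : ℝ) : ℂ) *
              Complex.exp (2 * π * Complex.I * ξ * z)
            ∂((volume : Measure ℝ).withDensity fun ξ => ENNReal.ofReal (pbar j ξ))) ∧
        ∀ j, Integrable
          (fun ξ : ℝ => (((F j ξ / I j) / pbar j ξ : ℝ) : ℂ) *
            Complex.exp (2 * π * Complex.I * ξ * z))
          ((volume : Measure ℝ).withDensity fun ξ => ENNReal.ofReal (pbar j ξ)) := by
  intro z
  have hsupp : ∀ j ξ, pbar j ξ ≤ 0 → F j ξ / I j = 0 := fun j ξ h =>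
    le_antisymm (not_lt.1 fun hF => (hpos j ξ hF).not_ge h) (div_nonneg (hFnn j ξ) (hIpos j).le)
  have hcoeff : ∀ ξ,
      ((F 0 ξ - F 1 ξ : ℝ) : ℂ) + Complex.I * (F 2 ξ : ℂ) - Complex.I * (F 3 ξ : ℂ) =
        ∑ j, c j * ((F j ξ / I j : ℝ) : ℂ) := fun ξ => by
    have hI : ∀ j, (I j : ℂ) ≠ 0 := fun j => Complex.ofReal_ne_zero.2 (hIpos j).ne'
    simp only [Fin.sum_univ_four, hc0, hc1, hc2, hc3, Complex.ofReal_div, Complex.ofReal_sub]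
    field_simp [hI 0, hI 1, hI 2, hI 3]
    ring
  simp_rw [← Complex.real_smul, integral_withDensity_ofReal_div_smul (hpbar_meas _) (hsupp _),
    integrable_withDensity_ofReal_div_smul_iff (hpbar_meas _) (hsupp _), Complex.real_smul]
  have hint : ∀ j, Integrable fun ξ : ℝ =>
      ((F j ξ / I j : ℝ) : ℂ) * Complex.exp (2 * π * Complex.I * ξ * z) := fun j =>
    integrable_ofReal_mul_exp_two_pi_I_mul ((hFint j).div_const _) z
  refine ⟨?_, hint⟩
  calc f z = ∫ ξ : ℝ, ∑ j, c j *
        (((F j ξ / I j : ℝ) : ℂ) * Complex.exp (2 * π * Complex.I * ξ * z)) := by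
        simp_rw [hinv z, hcoeff, Finset.sum_mul, mul_assoc]
    _ = _ := by
        rw [integral_finsetSum _ fun j _ => (hint j).const_mul _]
        simp_rw [integral_const_mul]

theorem stmt_11 (f : ℝ → ℂ) (F : Fin 4 → ℝ → ℝ)
    (hFnn : ∀ j ξ, 0 ≤ F j ξ) (hFint : ∀ j, Integrable (F j))
    (I : Fin 4 → ℝ) (hI : ∀ j, I j = ∫ ξ, F j ξ) (hIpos : ∀ j, 0 < I j)
    -- Fourier inversion representation of `f`
    (hinv : ∀ z : ℝ,
      f z = ∫ ξ : ℝ,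
        (((F 0 ξ - F 1 ξ : ℝ) : ℂ) + Complex.I * ((F 2 ξ : ℝ) : ℂ)
            - Complex.I * ((F 3 ξ : ℝ) : ℂ)) *
          Complex.exp (2 * π * Complex.I * ξ * z))
    -- proposal densities
    (pbar : Fin 4 → ℝ → ℝ) (hpbar_nn : ∀ j ξ, 0 ≤ pbar j ξ)
    (hpbar_meas : ∀ j, Measurable (pbar j))
    (hpbar_prob : ∀ j, ∫ ξ, pbar j ξ = 1)
    (hpos : ∀ j ξ, 0 < F j ξ / I j → 0 < pbar j ξ)
    (c : Fin 4 → ℂ)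
    (hc0 : c 0 = ((I 0 : ℝ) : ℂ)) (hc1 : c 1 = -((I 1 : ℝ) : ℂ))
    (hc2 : c 2 = Complex.I * ((I 2 : ℝ) : ℂ))
    (hc3 : c 3 = -(Complex.I * ((I 3 : ℝ) : ℂ))) :
    ∀ z : ℝ,
      (f z = ∑ j, c j *
          ∫ ξ, (((F j ξ / I j) / pbar j ξ : ℝ) : ℂ) *
              Complex.exp (2 * π * Complex.I * ξ * z)
            ∂((volume : Measure ℝ).withDensity fun ξ => ENNReal.ofReal (pbar j ξ))) ∧
        ∀ j, Integrable
          (fun ξ : ℝ => (((F j ξ / I j) / pbar j ξ : ℝ) : ℂ) *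
            Complex.exp (2 * π * Complex.I * ξ * z))
          ((volume : Measure ℝ).withDensity fun ξ => ENNReal.ofReal (pbar j ξ)) :=
  stmt_11_general f F hFnn hFint I hIpos hinv pbar hpbar_meas hpos c hc0 hc1 hc2 hc3
end

section
/- Let L ≥ 1 and d₀, …, d_L, m₁, …, m_L ≥ 1. Consider the deep network x_{i+1} = f_{i+1}(W_i x_i + b_i) for i = 0, …, L−1, with x₀ = x ∈ ℝ^{d₀}, W_i ∈ ℝ^{d_{i+1} × d_i}, b_i ∈ ℝ^{d_{i+1}}, activations f_{i+1} : ℝ → ℝ applied entrywise, and output y = x_L ∈ ℝ^{d_L}. Suppose for each i = 1, …, L there are maps Φ_i : ℝ^{n_i} → ℝ^{m_i} and Ψ_i : ℝ^{n_i} × ℝ → ℝ^{m_i} (with n₁ = d₀ and n_{i+1} = m_i for i ≥ 1) satisfying the exact linearization ⟨Φ_i(u), Ψ_i(v, c)⟩ = f_i(⟨v, u⟩ + c) for all u, v ∈ ℝ^{n_i}, c ∈ ℝ, where Ψ_i is extended to matrices row-wise. Define x̄ = Φ_L(Φ_{L−1}(…Φ₁(x)…)) ∈ ℝ^{m_L}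 and W̄ = Ψ_L(W_{L−1}·Ψ_{L−1}(…W₂·Ψ₂(W₁·Ψ₁(W₀, b₀), b₁)…, b_{L−2}), b_{L−1}) ∈ ℝ^{d_L × m_L}. Then W̄ · x̄ = y, i.e., the fully bundled two-tower representation reproduces the network output exactly. -/
/-- Dimension of the input space of the `i`-th layer map `Φ_i, Ψ_i`:
`n 1 = d₀` and `n (i+1) = m i` for `i ≥ 1`. -/
def nDim (d0 : ℕ) (m : ℕ → ℕ) : ℕ → ℕ
  | 0 => d0
  | 1 => d0
  | (i + 2) => m (i + 1)

/-- The deep network `x_{i+1} = f_{i+1}(W_i x_i + b_i)`, `x_0 = x`. -/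
noncomputable def netOut (d : ℕ → ℕ) (f : ℕ → ℝ → ℝ)
    (W : (i : ℕ) → Matrix (Fin (d (i + 1))) (Fin (d i)) ℝ)
    (b : (i : ℕ) → Fin (d (i + 1)) → ℝ) (x : Fin (d 0) → ℝ) :
    (i : ℕ) → Fin (d i) → ℝ
  | 0 => x
  | (i + 1) => fun j => f (i + 1) ((W i).mulVec (netOut d f W b x i) j + b i j)

/-- The bundled input tower `x̄_i = Φ_i(Φ_{i-1}(… Φ_1(x) …))`. -/
noncomputable def xBar (d0 : ℕ) (m : ℕ → ℕ)
    (Φ : (i : ℕ) → (Fin (nDim d0 m i) → ℝ) → (Fin (m i) → ℝ))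
    (x : Fin d0 → ℝ) : (i : ℕ) → Fin (m i) → ℝ
  | 0 => fun _ => 0
  | 1 => Φ 1 x
  | (i + 2) => Φ (i + 2) (xBar d0 m Φ x (i + 1))

/-- The bundled parameter tower
`W̄_1 = Ψ_1(W_0, b_0)`, `W̄_{i+1} = Ψ_{i+1}(W_i · W̄_i, b_i)`, with `Ψ` applied row-wise. -/
noncomputable def wBar (d : ℕ → ℕ) (m : ℕ → ℕ)
    (Ψ : (i : ℕ) → (Fin (nDim (d 0) m i) → ℝ) → ℝ → (Fin (m i) → ℝ))
    (W : (i : ℕ) → Matrix (Fin (d (i + 1))) (Fin (d i)) ℝ)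
    (b : (i : ℕ) → Fin (d (i + 1)) → ℝ) :
    (i : ℕ) → Matrix (Fin (d i)) (Fin (m i)) ℝ
  | 0 => 0
  | 1 => Matrix.of fun j => Ψ 1 (W 0 j) (b 0 j)
  | (i + 2) => Matrix.of fun j => Ψ (i + 2) ((W (i + 1) * wBar d m Ψ W b (i + 1)) j) (b (i + 1) j)

theorem stmt_15 (L : ℕ) (hL : 1 ≤ L) (d m : ℕ → ℕ) (f : ℕ → ℝ → ℝ)
    (Φ : (i : ℕ) → (Fin (nDim (d 0) m i) → ℝ) → (Fin (m i) → ℝ))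
    (Ψ : (i : ℕ) → (Fin (nDim (d 0) m i) → ℝ) → ℝ → (Fin (m i) → ℝ))
    -- exact linearization of each layer kernel: ⟨Φ_i(u), Ψ_i(v, c)⟩ = f_i(⟨v, u⟩ + c)
    (hlin : ∀ i, 1 ≤ i → i ≤ L → ∀ (u v : Fin (nDim (d 0) m i) → ℝ) (c : ℝ),
      ∑ k, Φ i u k * Ψ i v c k = f i (∑ k, v k * u k + c))
    (W : (i : ℕ) → Matrix (Fin (d (i + 1))) (Fin (d i)) ℝ)
    (b : (i : ℕ) → Fin (d (i + 1)) → ℝ)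
    (x : Fin (d 0) → ℝ) :
    (wBar d m Ψ W b L).mulVec (xBar (d 0) m Φ x L) = netOut d f W b x L := by
  induction L with
  | zero => omega
  | succ n ih =>
    funext j
    cases n with
    | zero =>
      show ∑ k, wBar d m Ψ W b 1 j k * xBar (d 0) m Φ x 1 k = _
      simp only [wBar, xBar, Matrix.of_apply]
      rw [Finset.sum_congr rfl (fun k _ => mul_comm _ _),
        hlin 1 le_rfl hL x (W 0 j) (b 0 j)]
      rfl
    | succ k =>
      have ih' := congrFun (ih (by omega)
        (fun i h1 h2 => hlin i h1 (by omega)))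
      show ∑ p, wBar d m Ψ W b (k+2) j p * xBar (d 0) m Φ x (k+2) p = _
      simp only [wBar, xBar, Matrix.of_apply]
      rw [Finset.sum_congr rfl (fun p _ => mul_comm _ _),
        hlin (k+2) (by omega) (by omega) (xBar (d 0) m Φ x (k+1))
          ((W (k+1) * wBar d m Ψ W b (k+1)) j) (b (k+1) j)]
      show f (k+2) ((W (k+1) * wBar d m Ψ W b (k+1)).mulVec (xBar (d 0) m Φ x (k+1)) j + b (k+1) j)
        = f (k+2) ((W (k+1)).mulVec (netOut d f W b x (k+1)) j + b (k+1) j)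
      rw [← Matrix.mulVec_mulVec, funext ih']
end
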